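/- Let $a \le b$ be real numbers and let $F, G : [a,b] \to \mathbb{R}$ be differentiable functions with $|F(t) - G(t)| \le \eta$ for all $t \in [a,b]$ and $F'(t) \le G'(t) + \eta$ for almost every $t$. Then for every $\eta' > 0$ with $(b-a)\eta' > 4\eta + (b-a)\eta$, the set of times $s \in [a,b]$ at which $F'(s) \ge G'(s) - \eta'$ has positive Lebesgue measure; more precisely, its measure is at least $\frac{(b-a)\eta' - 4\eta - (b-a)\eta}{2\eta'}$. -/

import Mathlib

/-!
Put `D = G' - F'`, so `D ≥ -η` a.e. on `[a, b]`. The truncation `min D η'` is bounded, hence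
integrable, and lies below `D`, so its integral is at most `(G - F)(b) - (G - F)(a) ≤ 2η`.
On the other hand it equals `η'` off `A = {D ≤ η'}` and is at least `-η` on `A`, so its
integral is at least `η' (b - a) - (η + η') |A|`. Comparing the two bounds gives
`(η + η') |A| ≥ η' (b - a) - 2η`, which is stronger than the claimed bound since `|A| ≤ b - a`.
-/

open MeasureTheory Set

section

variable {α : Type*} [MeasurableSpace α] {μ : Measure α} {s : Set α} {f : α → ℝ} {c d : ℝ}

lemma integrableOn_min_const_of_ae_le (hμs : μ s ≠ ⊤) (hf : AEStronglyMeasurable f (μ.restrict s))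
    (hfc : ∀ᵐ x ∂μ.restrict s, c ≤ f x) : IntegrableOn (fun x => min (f x) d) s μ := by
  refine .of_bound hμs.lt_top (hf.inf aestronglyMeasurable_const) (max |c| |d|) ?_
  filter_upwards [hfc] with x hx
  rw [Real.norm_eq_abs, abs_le]
  constructor
  · rcases min_choice c d with h | h <;>
      linarith [min_le_min_right d hx, neg_abs_le c, neg_abs_le d, le_max_left |c| |d|,
        le_max_right |c| |d|]
  · linarith [min_le_right (f x) d, le_abs_self d, le_max_right |c| |d|]

lemma sub_mul_measureReal_le_setIntegral_min (hμs : μ s ≠ ⊤) (hf : Measurable f)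
    (hfc : ∀ᵐ x ∂μ.restrict s, -c ≤ f x) :
    d * μ.real s - (c + d) * μ.real {x ∈ s | f x ≤ d} ≤ ∫ x in s, min (f x) d ∂μ := by
  set t := {x | f x ≤ d}
  have ht : MeasurableSet t := hf measurableSet_Iic
  -- `min f d` equals `d` off `t` and is at least `-c = d - (c + d)` on it.
  have hlow : ∀ᵐ x ∂μ.restrict s, d + t.indicator (fun _ => -(c + d)) x ≤ min (f x) d := by
    filter_upwards [hfc] with x hx
    by_cases hxt : x ∈ t
    · simp only [indicator_of_mem hxt, min_eq_left (show f x ≤ d from hxt)]; linarith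
    · simp only [indicator_of_notMem hxt, min_eq_right (not_le.1 (show ¬f x ≤ d from hxt)).le,
        add_zero, le_refl]
  have hconst : IntegrableOn (fun _ => d) s μ := integrableOn_const hμs
  have hind : IntegrableOn (t.indicator fun _ => -(c + d)) s μ :=
    (integrableOn_const hμs).indicator ht
  calc d * μ.real s - (c + d) * μ.real {x ∈ s | f x ≤ d}
      = ∫ x in s, d + t.indicator (fun _ => -(c + d)) x ∂μ := by
        rw [show {x ∈ s | f x ≤ d} = s ∩ t from rfl, integral_add hconst hind, setIntegral_const,
          setIntegral_indicator ht, setIntegral_const, smul_eq_mul, smul_eq_mul]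
        ring
    _ ≤ ∫ x in s, min (f x) d ∂μ :=
        setIntegral_mono_ae_restrict (hconst.add hind)
          (integrableOn_min_const_of_ae_le hμs hf.aestronglyMeasurable hfc) hlow

end

lemma setIntegral_min_le_sub_of_hasDerivAt {a b d : ℝ} {g g' : ℝ → ℝ} (hab : a ≤ b)
    (hg : ∀ t ∈ Icc a b, HasDerivAt g (g' t) t)
    (hint : IntegrableOn (fun t => min (g' t) d) (Icc a b)) :
    ∫ t in Icc a b, min (g' t) d ≤ g b - g a := by
  rw [integral_Icc_eq_integral_Ioc, ← intervalIntegral.integral_of_le hab]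
  exact intervalIntegral.integral_le_sub_of_hasDeriv_right_of_le hab
    (fun t ht => (hg t ht).continuousAt.continuousWithinAt)
    (fun t ht => (hg t (Ioo_subset_Icc_self ht)).hasDerivWithinAt) hint
    (fun _ _ => min_le_left _ _)

theorem stmt3_general (a b η η' : ℝ) (hab : a ≤ b) (hη : 0 ≤ η) (hη' : 0 < η')
    (F G : ℝ → ℝ) (hF : Differentiable ℝ F) (hG : Differentiable ℝ G)
    (hclose : ∀ t ∈ Set.Icc a b, |F t - G t| ≤ η)
    (hderiv : ∀ᵐ t ∂(volume.restrict (Set.Icc a b)), deriv F t ≤ deriv G t + η) :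
    ENNReal.ofReal (((b - a) * η' - 4 * η - (b - a) * η) / (2 * η')) ≤
      volume {s ∈ Set.Icc a b | deriv F s ≥ deriv G s - η'} := by
  set D : ℝ → ℝ := fun t => deriv G t - deriv F t
  have hD : Measurable D := (measurable_deriv G).sub (measurable_deriv F)
  have hDlow : ∀ᵐ t ∂(volume.restrict (Icc a b)), -η ≤ D t :=
    hderiv.mono fun t ht => by simp only [D]; linarith
  have hint : IntegrableOn (fun t => min (D t) η') (Icc a b) :=
    integrableOn_min_const_of_ae_le measure_Icc_lt_top.ne hD.aestronglyMeasurable hDlow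
  have hFTC : ∫ t in Icc a b, min (D t) η' ≤ (G b - F b) - (G a - F a) :=
    setIntegral_min_le_sub_of_hasDerivAt hab (fun t _ => (hG t).hasDerivAt.sub (hF t).hasDerivAt)
      hint
  have hends : (G b - F b) - (G a - F a) ≤ 2 * η := by
    have ha := abs_le.1 (hclose a (left_mem_Icc.2 hab))
    have hb := abs_le.1 (hclose b (right_mem_Icc.2 hab))
    linarith [ha.1, hb.2]
  set A := {t ∈ Icc a b | D t ≤ η'}
  have hA : (b - a) * η' - 2 * η ≤ (η + η') * volume.real A := by
    have := sub_mul_measureReal_le_setIntegral_min (d := η') measure_Icc_lt_top.ne hD hDlow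
    rw [Real.volume_real_Icc_of_le hab] at this
    linarith
  have hA_le : volume.real A ≤ b - a :=
    (measureReal_mono (sep_subset _ _) measure_Icc_lt_top.ne).trans_eq
      (Real.volume_real_Icc_of_le hab)
  have hset : {s ∈ Icc a b | deriv F s ≥ deriv G s - η'} = A := by
    simp only [A, D, ge_iff_le, sub_le_comm]
  rw [hset, ← ofReal_measureReal (measure_mono (sep_subset _ _) |>.trans_lt measure_Icc_lt_top).ne]
  refine ENNReal.ofReal_le_ofReal ((div_le_iff₀ (by positivity)).2 ?_)
  linarith [mul_nonneg hη'.le (measureReal_nonneg (μ := volume) (s := A)),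
    mul_le_mul_of_nonneg_left hA_le hη]

/-- Quantitative measure-selection lemma: if `|F - G| ≤ η` on `[a,b]` and
`F' ≤ G' + η` almost everywhere, then for any `η'` with `(b-a)η' > 4η + (b-a)η`,
the set of `s ∈ [a,b]` with `F'(s) ≥ G'(s) - η'` has Lebesgue measure at least
`((b-a)η' - 4η - (b-a)η)/(2η')`. -/
theorem stmt3 (a b η η' : ℝ) (hab : a ≤ b) (hη : 0 ≤ η) (hη' : 0 < η')
    (F G : ℝ → ℝ) (hF : Differentiable ℝ F) (hG : Differentiable ℝ G)
    (hclose : ∀ t ∈ Set.Icc a b, |F t - G t| ≤ η)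
    (hderiv : ∀ᵐ t ∂(volume.restrict (Set.Icc a b)), deriv F t ≤ deriv G t + η)
    (hbig : (b - a) * η' > 4 * η + (b - a) * η) :
    ENNReal.ofReal (((b - a) * η' - 4 * η - (b - a) * η) / (2 * η')) ≤
      volume {s ∈ Set.Icc a b | deriv F s ≥ deriv G s - η'} :=
  stmt3_general a b η η' hab hη hη' F G hF hG hclose hderiv
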